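/- Let A ⊆ ℝⁿ be a nonempty compact set, equipped with the ℓ₁ metric d(x,y) = ∑_{k=1}^n |x_k − y_k|. Then lim_{t→0⁺} |tA| = 1, where tA denotes A with the metric t·d and |·| denotes magnitude defined as the supremum over finite nonempty subsets. -/
import Mathlib


open Matrix BigOperators Filter Topology

/-- The magnitude of a finite subset `s` of a metric space, with the metric scaled by
`t`: the sum of the entries of the inverse of the matrix `[exp (-t d(a,b))]_{a,b ∈ s}`. -/
noncomputable def finMag {X : Type*} [MetricSpace X] (t : ℝ) (s : Finset X) : ℝ :=
  letI : DecidableEq X := Classical.decEq X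
  ∑ a : {x // x ∈ s}, ∑ b : {x // x ∈ s},
    (Matrix.of fun a b : {x // x ∈ s} => Real.exp (-(t * dist (a : X) (b : X))))⁻¹ a b

/-- The magnitude of `tA`, the compact positive definite metric space `A` with metric
scaled by `t`, as the supremum of the magnitudes of finite nonempty subsets. -/
noncomputable def mag {X : Type*} [MetricSpace X] (t : ℝ) (A : Set X) : ℝ :=
  sSup {m : ℝ | ∃ s : Finset X, s.Nonempty ∧ ↑s ⊆ A ∧ m = finMag t s}


section Aux
open Real Finset


lemma tele (N : ℕ) (Z : ℕ → ℝ) (hZ : Monotone Z) (φ : ℝ → ℝ) (c : ℝ) (i : ℕ)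
    (hiN : i ≤ N) (hic : Z i = c) :
    ∑ j ∈ Finset.range N, (if Z (j+1) ≤ c then φ (Z (j+1)) - φ (Z j) else 0)
      = φ c - φ (Z 0) := by
  have hterm : ∀ j, (if Z (j+1) ≤ c then φ (Z (j+1)) - φ (Z j) else 0)
      = φ (min (Z (j+1)) c) - φ (min (Z j) c) := by
    intro j
    by_cases h : Z (j+1) ≤ c
    · rw [if_pos h, min_eq_left h, min_eq_left ((hZ (Nat.le_succ j)).trans h)]
    · have hji : c ≤ Z j := by
        rcases le_or_gt i j with hij | hij
        · exact hic ▸ hZ hij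
        · exact absurd (hic ▸ hZ hij) h
      rw [if_neg h, min_eq_right (hji.trans (hZ (Nat.le_succ j))), min_eq_right hji, sub_self]
  simp only [hterm]
  rw [Finset.sum_range_sub (fun j => φ (min (Z j) c))]
  rw [min_eq_right (hic ▸ hZ hiN), min_eq_left (hic ▸ hZ (Nat.zero_le i))]

lemma wcs (N : ℕ) (μ lam x : ℕ → ℝ) (hlam : ∀ j, 0 ≤ lam j)
    (hz : ∀ j, lam j = 0 → μ j = 0) :
    (∑ j ∈ range N, μ j * x j)^2
      ≤ (∑ j ∈ range N, μ j ^2 / lam j) * (∑ j ∈ range N, lam j * x j ^2) := by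
  have h := Finset.sum_mul_sq_le_sq_mul_sq (range N)
    (fun j => μ j / Real.sqrt (lam j)) (fun j => Real.sqrt (lam j) * x j)
  have e1 : ∀ j, μ j / Real.sqrt (lam j) * (Real.sqrt (lam j) * x j) = μ j * x j := by
    intro j
    rcases eq_or_lt_of_le (hlam j) with h0 | h0
    · rw [hz j h0.symm]; simp
    · have : Real.sqrt (lam j) ≠ 0 := by positivity
      field_simp
  have e2 : ∀ j, (μ j / Real.sqrt (lam j))^2 = μ j ^2 / lam j := by
    intro j
    rw [div_pow, Real.sq_sqrt (hlam j)]
  have e3 : ∀ j, (Real.sqrt (lam j) * x j)^2 = lam j * x j ^2 := by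
    intro j
    rw [mul_pow, Real.sq_sqrt (hlam j)]
  simpa only [e1, e2, e3] using h

lemma ratio (a b : ℝ) (hab : a ≤ b) :
    (exp b - exp a)^2 / (exp (2*b) - exp (2*a)) ≤ b - a := by
  rcases eq_or_lt_of_le hab with h | h
  · subst h; simp
  · have hpq : exp a < exp b := Real.exp_lt_exp.2 h
    have h2 : exp (2*b) - exp (2*a) = (exp b - exp a) * (exp b + exp a) := by
      rw [two_mul, two_mul, Real.exp_add, Real.exp_add]; ring
    rw [h2, sq, mul_div_mul_left _ _ (show rexp b - rexp a ≠ 0 by linarith)]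
    have step1 : (exp b - exp a) / (exp b + exp a) ≤ (exp b - exp a) / exp b := by
      apply div_le_div_of_nonneg_left (by linarith) (exp_pos b) (by linarith [exp_pos a])
    refine step1.trans ?_
    have : (exp b - exp a) / exp b = 1 - exp (a - b) := by
      rw [sub_div, div_self (exp_pos b).ne', Real.exp_sub]
    rw [this]
    have := Real.add_one_le_exp (a - b)
    linarith

lemma key (n : ℕ) (ι : Type) [Fintype ι] (C : ℝ) (hC : 0 ≤ C) :
    ∀ (y : ι → Fin n → ℝ), (∀ a k, |y a k| ≤ C) → ∀ (w : ι → ℝ),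
    (∑ a, w a)^2 ≤ (1+2*C)^n * ∑ a, ∑ b, Real.exp (-∑ k, |y a k - y b k|) * (w a * w b) := by
  induction n with
  | zero =>
    intro y hy w
    simp only [pow_zero, one_mul, Finset.univ_eq_empty (α := Fin 0)]
    simp only [Finset.sum_empty, neg_zero, Real.exp_zero, one_mul]
    rw [sq, Finset.sum_mul_sum]
  | succ n ih =>
    intro y hy w
    rcases isEmpty_or_nonempty ι with hι | hι
    · simp [Finset.univ_eq_empty]
    set z : ι → ℝ := fun a => y a (Fin.last n) with hzdef
    set B : ι → ι → ℝ :=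
      fun a b => Real.exp (-∑ k : Fin n, |y a (Fin.castSucc k) - y b (Fin.castSucc k)|) with hBdef
    have hker : ∀ a b : ι, Real.exp (-∑ k, |y a k - y b k|)
        = B a b * Real.exp (-|z a - z b|) := by
      intro a b
      rw [Fin.sum_univ_castSucc, neg_add, Real.exp_add]
    obtain ⟨N, hcard⟩ : ∃ N, Fintype.card ι = N + 1 :=
      ⟨Fintype.card ι - 1, (Nat.succ_pred_eq_of_pos Fintype.card_pos).symm⟩
    obtain ⟨Z, hZmono, hZval, hzZ⟩ :
        ∃ Z : ℕ → ℝ, Monotone Z ∧ (∀ i, ∃ a, Z i = z a) ∧ ∀ a, ∃ i, i ≤ N ∧ Z i = z a := by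
      set e := Fintype.equivFin ι with he
      set sp := Tuple.sort (z ∘ e.symm) with hsp
      have hmono := Tuple.monotone_sort (z ∘ e.symm)
      refine ⟨fun i => ((z ∘ e.symm) ∘ sp) (⟨min i N, by rw [hcard]; omega⟩), ?_, ?_, ?_⟩
      · intro i j hij
        exact hmono (by simp only [Fin.mk_le_mk]; omega)
      · intro i; exact ⟨e.symm (sp _), rfl⟩
      · intro a
        have hlt : (sp.symm (e a)).val < N + 1 := by rw [← hcard]; exact (sp.symm (e a)).isLt
        refine ⟨(sp.symm (e a)).val, by omega, ?_⟩
        have hval : (⟨min (sp.symm (e a)).val N, by omega⟩ :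
            Fin (Fintype.card ι)) = sp.symm (e a) := by
          apply Fin.ext
          simp only [Fin.val_mk]
          omega
        simp only [Function.comp_apply, hval, Equiv.apply_symm_apply, Equiv.symm_apply_apply]
    have hZbound : ∀ i, |Z i| ≤ C := by
      intro i
      obtain ⟨a, ha⟩ := hZval i
      rw [ha]
      exact hy a (Fin.last n)
    obtain ⟨lam, hlam0, hlamS⟩ : ∃ lam : ℕ → ℝ, lam 0 = Real.exp (2*Z 0) ∧
        ∀ j, lam (j+1) = Real.exp (2*Z (j+1)) - Real.exp (2*Z j) :=
      ⟨fun j => Nat.casesOn j (Real.exp (2*Z 0))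
        (fun i => Real.exp (2*Z (i+1)) - Real.exp (2*Z i)), rfl, fun _ => rfl⟩
    obtain ⟨mu, hmu0, hmuS⟩ : ∃ mu : ℕ → ℝ, mu 0 = Real.exp (Z 0) ∧
        ∀ j, mu (j+1) = Real.exp (Z (j+1)) - Real.exp (Z j) :=
      ⟨fun j => Nat.casesOn j (Real.exp (Z 0))
        (fun i => Real.exp (Z (i+1)) - Real.exp (Z i)), rfl, fun _ => rfl⟩
    obtain ⟨R, hR0, hRS⟩ : ∃ R : ℕ → ι → ℝ, (∀ a, R 0 a = Real.exp (-z a)) ∧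
        ∀ j a, R (j+1) a = Real.exp (-z a) * (if Z (j+1) ≤ z a then 1 else 0) :=
      ⟨fun j => Nat.casesOn j (fun a => Real.exp (-z a))
        (fun i a => Real.exp (-z a) * (if Z (i+1) ≤ z a then 1 else 0)),
        fun _ => rfl, fun _ _ => rfl⟩
    -- decomposition of the 1D kernel
    have hdecomp : ∀ a b : ι, Real.exp (-|z a - z b|)
        = ∑ j ∈ Finset.range (N+1), lam j * (R j a * R j b) := by
      intro a b
      rw [Finset.sum_range_succ']
      have h1 : ∀ j, lam (j+1) * (R (j+1) a * R (j+1) b)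
          = Real.exp (-z a) * Real.exp (-z b) *
            (if Z (j+1) ≤ min (z a) (z b)
              then Real.exp (2*Z (j+1)) - Real.exp (2*Z j) else 0) := by
        intro j
        rw [hlamS, hRS, hRS]
        by_cases ha : Z (j+1) ≤ z a <;> by_cases hb : Z (j+1) ≤ z b
        · rw [if_pos ha, if_pos hb, if_pos (le_min ha hb)]; ring
        · rw [if_pos ha, if_neg hb, if_neg (fun h => hb ((le_min_iff.mp h).2))]; ring
        · rw [if_neg ha, if_pos hb, if_neg (fun h => ha ((le_min_iff.mp h).1))]; ring
        · rw [if_neg ha, if_neg hb, if_neg (fun h => ha ((le_min_iff.mp h).1))]; ring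
      simp only [h1]
      rw [← Finset.mul_sum]
      obtain ⟨ia, hia, ha⟩ := hzZ a
      obtain ⟨ib, hib, hb⟩ := hzZ b
      have hminZ : Z (min ia ib) = min (z a) (z b) := by
        rw [hZmono.map_min, ha, hb]
      rw [show (∑ j ∈ Finset.range N, if Z (j+1) ≤ min (z a) (z b)
              then Real.exp (2*Z (j+1)) - Real.exp (2*Z j) else 0)
            = Real.exp (2 * min (z a) (z b)) - Real.exp (2*Z 0) from by
          simpa using tele N Z hZmono (fun s => Real.exp (2*s)) (min (z a) (z b))
            (min ia ib) (le_trans (min_le_left _ _) hia) hminZ]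
      rw [hlam0, hR0, hR0]
      rw [show Real.exp (-z a) * Real.exp (-z b) * (Real.exp (2 * min (z a) (z b)) - Real.exp (2*Z 0))
            + Real.exp (2*Z 0) * (Real.exp (-z a) * Real.exp (-z b))
          = Real.exp (-z a) * Real.exp (-z b) * Real.exp (2 * min (z a) (z b)) from by ring]
      rw [← Real.exp_add, ← Real.exp_add]
      congr 1
      rcases le_total (z a) (z b) with h | h
      · rw [min_eq_left h, abs_of_nonpos (by linarith)]; ring
      · rw [min_eq_right h, abs_of_nonneg (by linarith)]; ring
    -- decomposition of the weight
    have hsum : ∀ a : ι, w a = ∑ j ∈ Finset.range (N+1), mu j * (R j a * w a) := by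
      intro a
      rw [Finset.sum_range_succ']
      have h1 : ∀ j, mu (j+1) * (R (j+1) a * w a)
          = (Real.exp (-z a) * w a) *
            (if Z (j+1) ≤ z a then Real.exp (Z (j+1)) - Real.exp (Z j) else 0) := by
        intro j
        rw [hmuS, hRS]
        by_cases h : Z (j+1) ≤ z a
        · rw [if_pos h, if_pos h]; ring
        · rw [if_neg h, if_neg h]; ring
      simp only [h1]
      rw [← Finset.mul_sum]
      obtain ⟨ia, hia, ha⟩ := hzZ a
      rw [show (∑ j ∈ Finset.range N, if Z (j+1) ≤ z a
              then Real.exp (Z (j+1)) - Real.exp (Z j) else 0)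
            = Real.exp (z a) - Real.exp (Z 0) from by
          simpa using tele N Z hZmono Real.exp (z a) ia hia ha]
      rw [hmu0, hR0]
      have hee : Real.exp (-z a) * Real.exp (z a) = 1 := by
        rw [← Real.exp_add]; simp
      linear_combination (-(w a)) * hee
    -- abbreviations
    set X : ℕ → ℝ := fun j => ∑ a, R j a * w a with hXdef
    set T : ℕ → ℝ := fun j => ∑ a, ∑ b, B a b * ((R j a * w a) * (R j b * w b)) with hTdef
    have hQ : ∑ a, ∑ b, B a b * Real.exp (-|z a - z b|) * (w a * w b)
        = ∑ j ∈ Finset.range (N+1), lam j * T j := by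
      have hpt : ∀ a b : ι, B a b * Real.exp (-|z a - z b|) * (w a * w b)
          = ∑ j ∈ Finset.range (N+1), lam j * (B a b * ((R j a * w a) * (R j b * w b))) := by
        intro a b
        rw [hdecomp a b, Finset.mul_sum, Finset.sum_mul]
        exact Finset.sum_congr rfl fun j _ => by ring
      simp only [hpt]
      have step1 : ∀ a : ι, (∑ b : ι, ∑ j ∈ Finset.range (N+1),
            lam j * (B a b * ((R j a * w a) * (R j b * w b))))
          = ∑ j ∈ Finset.range (N+1), ∑ b : ι,
            lam j * (B a b * ((R j a * w a) * (R j b * w b))) :=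
        fun a => Finset.sum_comm
      simp only [step1]
      rw [Finset.sum_comm]
      refine Finset.sum_congr rfl fun j _ => ?_
      simp only [hTdef, Finset.mul_sum]
    have hlamnn : ∀ j, 0 ≤ lam j := by
      intro j
      cases j with
      | zero => rw [hlam0]; positivity
      | succ i =>
        rw [hlamS]
        have h1 := hZmono (Nat.le_succ i)
        have h2 : Real.exp (2*Z i) ≤ Real.exp (2*Z (i+1)) :=
          Real.exp_le_exp.2 (by linarith)
        linarith
    have hlmu : ∀ j, lam j = 0 → mu j = 0 := by
      intro j
      cases j with
      | zero => rw [hlam0]; intro h; exact absurd h (Real.exp_ne_zero _)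
      | succ i =>
        rw [hlamS, hmuS]
        intro h
        have he : Real.exp (2*Z (i+1)) = Real.exp (2*Z i) := by linarith
        have h2 : 2*Z (i+1) = 2*Z i := Real.exp_eq_exp.mp he
        have h3 : Z (i+1) = Z i := by linarith
        rw [h3, sub_self]
    have hT : ∀ j, X j ^2 ≤ (1+2*C)^n * T j := by
      intro j
      have h := ih (fun a k => y a (Fin.castSucc k)) (fun a k => hy a _)
        (fun a => R j a * w a)
      simpa only [hXdef, hTdef, hBdef] using h
    have hXw : ∑ a, w a = ∑ j ∈ Finset.range (N+1), mu j * X j := by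
      calc ∑ a, w a = ∑ a, ∑ j ∈ Finset.range (N+1), mu j * (R j a * w a) :=
            Finset.sum_congr rfl fun a _ => hsum a
        _ = ∑ j ∈ Finset.range (N+1), ∑ a, mu j * (R j a * w a) := Finset.sum_comm
        _ = ∑ j ∈ Finset.range (N+1), mu j * X j := by
            refine Finset.sum_congr rfl fun j _ => ?_
            simp only [hXdef, Finset.mul_sum]
    have hCS := wcs (N+1) mu lam X hlamnn hlmu
    have hfac1 : ∑ j ∈ Finset.range (N+1), mu j ^2 / lam j ≤ 1 + 2*C := by
      rw [Finset.sum_range_succ']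
      have h1 : ∀ j ∈ Finset.range N, mu (j+1)^2/lam (j+1) ≤ Z (j+1) - Z j := by
        intro j _
        rw [hmuS, hlamS]
        exact ratio _ _ (hZmono (Nat.le_succ j))
      have h2 : mu 0 ^2 / lam 0 = 1 := by
        rw [hmu0, hlam0, sq, ← Real.exp_add, two_mul, div_self (Real.exp_ne_zero _)]
      have h3 : ∑ j ∈ Finset.range N, (Z (j+1) - Z j) = Z N - Z 0 :=
        Finset.sum_range_sub Z N
      have h4 : Z N - Z 0 ≤ 2*C := by
        have hN := hZbound N
        have h0 := hZbound 0
        rw [abs_le] at hN h0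
        linarith [hN.1, hN.2, h0.1, h0.2]
      refine le_trans (add_le_add (Finset.sum_le_sum h1) (le_of_eq h2)) ?_
      rw [h3]
      linarith
    have hfac2 : ∑ j ∈ Finset.range (N+1), lam j * X j^2 ≤ (1+2*C)^n *
        (∑ a, ∑ b, B a b * Real.exp (-|z a - z b|) * (w a * w b)) := by
      rw [hQ, Finset.mul_sum]
      refine Finset.sum_le_sum fun j _ => ?_
      calc lam j * X j^2 ≤ lam j * ((1+2*C)^n * T j) :=
            mul_le_mul_of_nonneg_left (hT j) (hlamnn j)
        _ = (1+2*C)^n * (lam j * T j) := by ring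
    have hfac2nn : 0 ≤ ∑ j ∈ Finset.range (N+1), lam j * X j^2 :=
      Finset.sum_nonneg fun j _ => mul_nonneg (hlamnn j) (sq_nonneg _)
    have hgoalker : (∑ a, ∑ b, Real.exp (-∑ k, |y a k - y b k|) * (w a * w b))
        = ∑ a, ∑ b, B a b * Real.exp (-|z a - z b|) * (w a * w b) := by
      refine Finset.sum_congr rfl fun a _ => Finset.sum_congr rfl fun b _ => ?_
      rw [hker a b]
    rw [hgoalker]
    calc (∑ a, w a)^2 = (∑ j ∈ Finset.range (N+1), mu j * X j)^2 := by rw [hXw]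
      _ ≤ (∑ j ∈ Finset.range (N+1), mu j ^2/lam j) *
          (∑ j ∈ Finset.range (N+1), lam j * X j^2) := hCS
      _ ≤ (1+2*C) * (∑ j ∈ Finset.range (N+1), lam j * X j^2) :=
          mul_le_mul_of_nonneg_right hfac1 hfac2nn
      _ ≤ (1+2*C) * ((1+2*C)^n *
          (∑ a, ∑ b, B a b * Real.exp (-|z a - z b|) * (w a * w b))) :=
          mul_le_mul_of_nonneg_left hfac2 (by linarith)
      _ = (1+2*C)^(n+1) *
          (∑ a, ∑ b, B a b * Real.exp (-|z a - z b|) * (w a * w b)) := by ring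

lemma dist_pilp1 (n : ℕ) (x y : PiLp 1 fun _ : Fin n => ℝ) :
    dist x y = ∑ k, |x k - y k| := by
  rw [PiLp.dist_eq_sum (by norm_num)]
  simp [Real.dist_eq]

lemma inv_sum_le {ι : Type} [Fintype ι] [DecidableEq ι] (M : ℝ) (hM : 1 ≤ M)
    (Z : Matrix ι ι ℝ)
    (hq : ∀ u : ι → ℝ, (∑ a, u a)^2 ≤ M * ∑ a, ∑ b, Z a b * (u a * u b)) :
    ∑ a, ∑ b, Z⁻¹ a b ≤ M := by
  by_cases hdet : IsUnit Z.det
  · set u : ι → ℝ := Z⁻¹ *ᵥ (fun _ => 1) with hu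
    have hZu : Z *ᵥ u = fun _ => 1 := by
      rw [hu, Matrix.mulVec_mulVec, Matrix.mul_nonsing_inv _ hdet, Matrix.one_mulVec]
    have hsum : ∑ a, ∑ b, Z⁻¹ a b = ∑ a, u a := by
      refine Finset.sum_congr rfl fun a _ => ?_
      rw [hu]
      simp [Matrix.mulVec, dotProduct]
    have hquad : ∑ a, ∑ b, Z a b * (u a * u b) = ∑ a, u a := by
      have h1 : ∀ a, ∑ b, Z a b * (u a * u b) = u a * (Z *ᵥ u) a := by
        intro a
        simp only [Matrix.mulVec, dotProduct, Finset.mul_sum]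
        exact Finset.sum_congr rfl fun b _ => by ring
      simp only [h1, hZu]
      simp
    have h := hq u
    rw [hquad] at h
    rw [hsum]
    nlinarith [h, hM]
  · rw [Matrix.nonsing_inv_apply_not_isUnit _ hdet]
    simp only [Matrix.zero_apply, Finset.sum_const_zero]
    linarith

lemma finMag_le (n : ℕ) (C t : ℝ) (hC : 0 ≤ C) (ht : 0 ≤ t)
    (s : Finset (PiLp 1 fun _ : Fin n => ℝ))
    (hs : ∀ x ∈ s, ∀ k, |x k| ≤ C) :
    finMag t s ≤ (1 + 2*(t*C))^n := by
  have hM : (1:ℝ) ≤ (1 + 2*(t*C))^n :=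
    one_le_pow₀ (by nlinarith [mul_nonneg ht hC])
  letI : DecidableEq (PiLp 1 fun _ : Fin n => ℝ) := Classical.decEq _
  unfold finMag
  refine inv_sum_le _ hM _ ?_
  intro u
  have hkereq : ∀ a b : {x // x ∈ s},
      (∑ k, |t * (a : PiLp 1 fun _ : Fin n => ℝ) k
           - t * (b : PiLp 1 fun _ : Fin n => ℝ) k|)
      = t * dist (a : PiLp 1 fun _ : Fin n => ℝ) (b : PiLp 1 fun _ : Fin n => ℝ) := by
    intro a b
    rw [dist_pilp1, Finset.mul_sum]
    exact Finset.sum_congr rfl fun k _ => by rw [← mul_sub, abs_mul, abs_of_nonneg ht]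
  have h := key n {x // x ∈ s} (t*C) (mul_nonneg ht hC)
    (fun a k => t * (a : PiLp 1 fun _ : Fin n => ℝ) k)
    (fun a k => by
      rw [abs_mul, abs_of_nonneg ht]
      exact mul_le_mul_of_nonneg_left (hs a a.2 k) ht) u
  simp only [hkereq] at h
  simpa only [Matrix.of_apply] using h

lemma finMag_singleton {X : Type*} [MetricSpace X] (t : ℝ) (a : X) :
    finMag t ({a} : Finset X) = 1 := by
  letI : DecidableEq X := Classical.decEq X
  unfold finMag
  have hsub : Subsingleton {x // x ∈ ({a} : Finset X)} := by
    constructor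
    rintro ⟨x, hx⟩ ⟨y, hy⟩
    simp only [Finset.mem_singleton] at hx hy
    subst hx; subst hy; rfl
  have hZ : (Matrix.of fun i j : {x // x ∈ ({a} : Finset X)} =>
      Real.exp (-(t * dist (i : X) (j : X)))) = 1 := by
    ext i j
    have hij : i = j := Subsingleton.elim i j
    subst hij
    rw [Matrix.of_apply, Matrix.one_apply_eq, dist_self, mul_zero, neg_zero, Real.exp_zero]
  have hinv : (1 : Matrix {x // x ∈ ({a} : Finset X)} {x // x ∈ ({a} : Finset X)} ℝ)⁻¹ = 1 :=
    Matrix.inv_eq_right_inv (by rw [one_mul])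
  rw [hZ, hinv]
  have h1 : ∀ i : {x // x ∈ ({a} : Finset X)},
      ∑ j : {x // x ∈ ({a} : Finset X)}, (1 : Matrix _ _ ℝ) i j = 1 := by
    intro i
    simp [Matrix.one_apply]
    exact Subsingleton.elim _ _
  simp only [h1]
  simp


end Aux

/-- For a nonempty compact subset `A` of `ℝⁿ` with the `ℓ₁` metric,
`|tA| → 1` as `t → 0⁺`. -/
theorem stmt_13 (n : ℕ) (A : Set (PiLp 1 fun _ : Fin n => ℝ))
    (hA : IsCompact A) (hAne : A.Nonempty) :
    Tendsto (fun t : ℝ => mag t A) (nhdsWithin 0 (Set.Ioi 0)) (𝓝 1) := by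
  obtain ⟨r, hr⟩ := hA.isBounded.subset_closedBall (0 : PiLp 1 fun _ : Fin n => ℝ)
  set C := max r 0 with hCdef
  have hC : 0 ≤ C := le_max_right r 0
  have hbound : ∀ x ∈ A, ∀ k, |x k| ≤ C := by
    intro x hx k
    have h1 : dist x 0 ≤ r := by simpa [Metric.mem_closedBall] using hr hx
    have h2 : |x k| ≤ dist x 0 := by
      rw [dist_pilp1]
      have h3 : |x k - (0 : PiLp 1 fun _ : Fin n => ℝ) k| = |x k| := by
        norm_num
      calc |x k| = |x k - (0 : PiLp 1 fun _ : Fin n => ℝ) k| := h3.symm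
        _ ≤ ∑ j, |x j - (0 : PiLp 1 fun _ : Fin n => ℝ) j| :=
          Finset.single_le_sum (f := fun j => |x j - (0 : PiLp 1 fun _ : Fin n => ℝ) j|)
            (fun j _ => abs_nonneg _) (Finset.mem_univ k)
    calc |x k| ≤ r := le_trans h2 h1
      _ ≤ C := le_max_left r 0
  have hub : ∀ t : ℝ, 0 ≤ t → ∀ m ∈ {m : ℝ | ∃ s : Finset (PiLp 1 fun _ : Fin n => ℝ),
      s.Nonempty ∧ ↑s ⊆ A ∧ m = finMag t s}, m ≤ (1+2*(t*C))^n := by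
    rintro t ht m ⟨s, hsne, hsA, rfl⟩
    exact finMag_le n C t hC ht s (fun x hx k => hbound x (hsA hx) k)
  have hmem1 : ∀ t : ℝ, (1:ℝ) ∈ {m : ℝ | ∃ s : Finset (PiLp 1 fun _ : Fin n => ℝ),
      s.Nonempty ∧ ↑s ⊆ A ∧ m = finMag t s} := by
    intro t
    obtain ⟨a, ha⟩ := hAne
    exact ⟨{a}, Finset.singleton_nonempty a, by simpa using ha, (finMag_singleton t a).symm⟩
  have hlow : ∀ t : ℝ, 0 ≤ t → 1 ≤ mag t A := by
    intro t ht
    exact le_csSup ⟨(1+2*(t*C))^n, fun m hm => hub t ht m hm⟩ (hmem1 t)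
  have hhigh : ∀ t : ℝ, 0 ≤ t → mag t A ≤ (1+2*(t*C))^n := by
    intro t ht
    exact csSup_le ⟨1, hmem1 t⟩ (hub t ht)
  have hUB : Tendsto (fun t : ℝ => (1+2*(t*C))^n) (nhdsWithin 0 (Set.Ioi 0)) (𝓝 1) := by
    have hcont : Continuous fun t : ℝ => (1+2*(t*C))^n := by continuity
    have h0 := hcont.tendsto 0
    have hval : (1+2*((0:ℝ)*C))^n = 1 := by norm_num
    rw [hval] at h0
    exact h0.mono_left nhdsWithin_le_nhds
  refine tendsto_of_tendsto_of_tendsto_of_le_of_le' tendsto_const_nhds hUB ?_ ?_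
  · filter_upwards [self_mem_nhdsWithin] with t ht
    exact hlow t (le_of_lt ht)
  · filter_upwards [self_mem_nhdsWithin] with t ht
    exact hhigh t (le_of_lt ht)
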